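/- arXiv:2410.15160 — 3 statements merged into one kernel-verified Lean document; each statement's English description precedes it below -/
import Mathlib

section
/- For ξ > 2 and η = (2 + √ξ)/(ξ + √ξ), the function G_ξ(z) = ∫_{−∞}^{∞} exp(−e^{(y−z)/η} − η e^{−z} ∫_0^{e^{(y−z)/η}} s^{−1−η}(1 − e^{−s}) ds) · exp(−y − e^{−y}) dy is nondecreasing in z, with limit 0 as z → −∞ and limit 1 as z → +∞; hence G_ξ is a cumulative distribution function. -/
open MeasureTheory Filter

noncomputable def Gxi (η : ℝ) (z : ℝ) : ℝ :=
  ∫ y : ℝ, Real.exp (-(Real.exp ((y - z) / η))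
      - η * Real.exp (-z) *
        ∫ s in (0:ℝ)..(Real.exp ((y - z) / η)), s ^ (-1 - η) * (1 - Real.exp (-s)))
    * Real.exp (-y - Real.exp (-y))

open Set Real Topology

/-!
`Gxi η z` is the average, against the Gumbel density `λ`, of the kernel
`exp (-A - η e^{-z} F(A))` with `A = e^{(y-z)/η}` and `F(u) = ∫₀ᵘ s^{-1-η}(1 - e^{-s}) ds`.
For `0 < η < 1` (which is exactly what `ξ > 2` gives) `F` is finite, nonnegative and
nondecreasing, so the kernel takes values in `(0, 1]` and is nondecreasing in `z`; as `z → -∞`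
it is at most `exp (-A) → 0`, and as `z → +∞` both `A` and `e^{-z} F(A)` tend to `0`.
Since `∫ λ = 1`, monotonicity and both limits follow by dominated convergence.
-/

theorem integrable_deriv_of_nonneg_of_abs_le {f f' : ℝ → ℝ} {C : ℝ}
    (hderiv : ∀ x, HasDerivAt f (f' x) x) (hf' : ∀ x, 0 ≤ f' x) (hf : ∀ x, |f x| ≤ C) :
    Integrable f' := by
  have hcont : Continuous f := continuous_iff_continuousAt.2 fun x => (hderiv x).continuousAt
  refine integrable_of_intervalIntegral_norm_bounded (2 * C) (a := Neg.neg) (b := id)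
    (fun _ => intervalIntegral.integrableOn_deriv_of_nonneg hcont.continuousOn
      (fun x _ => hderiv x) (fun x _ => hf' x))
    tendsto_neg_atTop_atBot tendsto_id (Eventually.of_forall fun t => ?_)
  have hint : IntervalIntegrable f' volume (-t) t :=
    intervalIntegral.intervalIntegrable_deriv_of_nonneg hcont.continuousOn (fun x _ => hderiv x)
      (fun x _ => hf' x)
  simp only [id, Real.norm_of_nonneg (hf' _)]
  rw [intervalIntegral.integral_eq_sub_of_hasDerivAt (fun x _ => hderiv x) hint]
  linarith [abs_le.1 (hf t), abs_le.1 (hf (-t))]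

theorem tendsto_integral_mul_of_norm_le_one {α ι : Type*} [MeasurableSpace α] {μ : Measure α}
    {l : Filter ι} [l.IsCountablyGenerated] {f : ι → α → ℝ} {g ρ : α → ℝ}
    (hρ : Integrable ρ μ) (hf : ∀ i, AEStronglyMeasurable (f i) μ) (hf_le : ∀ i x, ‖f i x‖ ≤ 1)
    (hlim : ∀ x, Tendsto (f · x) l (𝓝 (g x))) :
    Tendsto (fun i => ∫ x, f i x * ρ x ∂μ) l (𝓝 (∫ x, g x * ρ x ∂μ)) :=
  tendsto_integral_filter_of_dominated_convergence (fun x => ‖ρ x‖)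
    (Eventually.of_forall fun i => (hf i).mul hρ.aestronglyMeasurable)
    (Eventually.of_forall fun i => ae_of_all _ fun x => by
      rw [norm_mul]; exact mul_le_of_le_one_left (norm_nonneg _) (hf_le i x))
    hρ.norm (ae_of_all _ fun x => (hlim x).mul_const _)

noncomputable def gumbelDensity (y : ℝ) : ℝ := exp (-y - exp (-y))

theorem gumbelDensity_nonneg (y : ℝ) : 0 ≤ gumbelDensity y := (exp_pos _).le

theorem hasDerivAt_exp_neg_exp_neg (y : ℝ) :
    HasDerivAt (fun t => exp (-exp (-t))) (gumbelDensity y) y := by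
  have h := ((hasDerivAt_neg y).exp.neg).exp
  simp only [Pi.neg_apply] at h
  refine h.congr_deriv ?_
  rw [gumbelDensity, sub_eq_add_neg, exp_add]
  ring

theorem tendsto_exp_neg_exp_neg_atBot : Tendsto (fun t => exp (-exp (-t))) atBot (𝓝 0) :=
  tendsto_exp_atBot.comp <| tendsto_neg_atTop_atBot.comp <|
    tendsto_exp_atTop.comp tendsto_neg_atBot_atTop

theorem tendsto_exp_neg_exp_neg_atTop : Tendsto (fun t => exp (-exp (-t))) atTop (𝓝 1) := by
  have h := ((tendsto_exp_atBot.comp tendsto_neg_atTop_atBot).neg).rexp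
  simpa [Function.comp_def] using h

theorem integrable_gumbelDensity : Integrable gumbelDensity :=
  integrable_deriv_of_nonneg_of_abs_le hasDerivAt_exp_neg_exp_neg gumbelDensity_nonneg
    fun t => by
      rw [abs_of_pos (exp_pos _)]
      exact exp_le_one_iff.2 (neg_nonpos.2 (exp_pos _).le)

theorem integral_gumbelDensity : ∫ y, gumbelDensity y = 1 := by
  rw [integral_of_hasDerivAt_of_tendsto hasDerivAt_exp_neg_exp_neg integrable_gumbelDensity
    tendsto_exp_neg_exp_neg_atBot tendsto_exp_neg_exp_neg_atTop, sub_zero]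

noncomputable def innerIntegral (η u : ℝ) : ℝ :=
  ∫ s in (0:ℝ)..u, s ^ (-1 - η) * (1 - exp (-s))

section innerIntegral

variable {η : ℝ}

theorem rpow_neg_one_sub_mul_one_sub_exp_neg_nonneg {s : ℝ} (hs : 0 ≤ s) :
    0 ≤ s ^ (-1 - η) * (1 - exp (-s)) :=
  mul_nonneg (rpow_nonneg hs _) (sub_nonneg.2 (exp_le_one_iff.2 (neg_nonpos.2 hs)))

theorem innerIntegral_nonneg {u : ℝ} (hu : 0 ≤ u) : 0 ≤ innerIntegral η u :=
  intervalIntegral.integral_nonneg hu fun _ hs => rpow_neg_one_sub_mul_one_sub_exp_neg_nonneg hs.1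

theorem rpow_neg_one_sub_mul_one_sub_exp_neg_le {s : ℝ} (hs : 0 < s) :
    s ^ (-1 - η) * (1 - exp (-s)) ≤ s ^ (-η) :=
  calc s ^ (-1 - η) * (1 - exp (-s)) ≤ s ^ (-1 - η) * s :=
        mul_le_mul_of_nonneg_left (by linarith [add_one_le_exp (-s)]) (rpow_nonneg hs.le _)
    _ = s ^ (-η) := by rw [← rpow_add_one hs.ne']; ring_nf

theorem intervalIntegrable_rpow_neg_one_sub_mul_one_sub_exp_neg (hη : η < 1) {u : ℝ} (hu : 0 ≤ u) :
    IntervalIntegrable (fun s => s ^ (-1 - η) * (1 - exp (-s))) volume 0 u := by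
  refine (intervalIntegral.intervalIntegrable_rpow' (r := -η) (by linarith)).mono_fun ?_ ?_
  · refine ContinuousOn.aestronglyMeasurable ?_ measurableSet_uIoc
    refine ContinuousOn.mul ?_ (by fun_prop)
    refine continuousOn_id.rpow_const fun s hs => Or.inl ?_
    rw [uIoc_of_le hu] at hs
    exact hs.1.ne'
  · rw [uIoc_of_le hu, EventuallyLE, ae_restrict_iff' measurableSet_Ioc]
    refine Eventually.of_forall fun s hs => ?_
    rw [Real.norm_of_nonneg (rpow_neg_one_sub_mul_one_sub_exp_neg_nonneg hs.1.le),
      Real.norm_of_nonneg (rpow_nonneg hs.1.le _)]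
    exact rpow_neg_one_sub_mul_one_sub_exp_neg_le hs.1

theorem innerIntegral_monotoneOn (hη : η < 1) : MonotoneOn (innerIntegral η) (Ici 0) :=
  fun _ hu _ hv huv =>
    intervalIntegral.integral_mono_interval le_rfl hu huv
      (ae_restrict_of_forall_mem measurableSet_Ioc fun _ hs =>
        rpow_neg_one_sub_mul_one_sub_exp_neg_nonneg hs.1.le)
      (intervalIntegrable_rpow_neg_one_sub_mul_one_sub_exp_neg hη hv)

theorem neg_sub_mul_innerIntegral_le (hη : η < 1) {a a' c c' : ℝ} (ha : 0 ≤ a) (haa' : a ≤ a')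
    (hc : 0 ≤ c) (hcc' : c ≤ c') :
    -a' - c' * innerIntegral η a' ≤ -a - c * innerIntegral η a := by
  have hF := innerIntegral_monotoneOn hη ha (ha.trans haa') haa'
  have hF' := innerIntegral_nonneg (η := η) (ha.trans haa')
  nlinarith [mul_le_mul_of_nonneg_left hF hc]

end innerIntegral

noncomputable def gxiKernel (η z y : ℝ) : ℝ :=
  exp (-exp ((y - z) / η) - η * exp (-z) * innerIntegral η (exp ((y - z) / η)))

theorem Gxi_eq_integral (η : ℝ) :
    Gxi η = fun z => ∫ y, gxiKernel η z y * gumbelDensity y := rfl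

section gxiKernel

variable {η : ℝ}

theorem gxiKernel_le_exp_neg (hη : 0 ≤ η) (z y : ℝ) :
    gxiKernel η z y ≤ exp (-exp ((y - z) / η)) := by
  refine exp_le_exp.2 (sub_le_self _ (mul_nonneg (mul_nonneg hη (exp_pos _).le) ?_))
  exact innerIntegral_nonneg (exp_pos _).le

theorem norm_gxiKernel_le_one (hη : 0 ≤ η) (z y : ℝ) : ‖gxiKernel η z y‖ ≤ 1 := by
  have hpos : 0 < gxiKernel η z y := exp_pos _
  rw [Real.norm_of_nonneg hpos.le]
  exact (gxiKernel_le_exp_neg hη z y).trans (exp_le_one_iff.2 (neg_nonpos.2 (exp_pos _).le))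

theorem gxiKernel_monotone (hη₀ : 0 < η) (hη₁ : η < 1) (y : ℝ) :
    Monotone fun z => gxiKernel η z y := fun z₁ z₂ hz =>
  exp_le_exp.2 <| neg_sub_mul_innerIntegral_le hη₁ (exp_pos _).le
    (exp_le_exp.2 (div_le_div_of_nonneg_right (by linarith) hη₀.le))
    (mul_nonneg hη₀.le (exp_pos _).le)
    (mul_le_mul_of_nonneg_left (exp_le_exp.2 (neg_le_neg hz)) hη₀.le)

theorem gxiKernel_antitone (hη₀ : 0 < η) (hη₁ : η < 1) (z : ℝ) : Antitone (gxiKernel η z) :=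
  fun y₁ y₂ hy =>
  exp_le_exp.2 <| neg_sub_mul_innerIntegral_le hη₁ (exp_pos _).le
    (exp_le_exp.2 (div_le_div_of_nonneg_right (by linarith) hη₀.le))
    (mul_nonneg hη₀.le (exp_pos _).le) le_rfl

theorem tendsto_gxiKernel_atBot (hη : 0 < η) (y : ℝ) :
    Tendsto (fun z => gxiKernel η z y) atBot (𝓝 0) := by
  have hA : Tendsto (fun z => exp ((y - z) / η)) atBot atTop :=
    tendsto_exp_atTop.comp <|
      (tendsto_atTop_add_const_left _ y tendsto_neg_atBot_atTop).atTop_div_const hη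
  exact squeeze_zero (fun z => (exp_pos _).le) (fun z => gxiKernel_le_exp_neg hη.le z y)
    (tendsto_exp_atBot.comp (tendsto_neg_atTop_atBot.comp hA))

theorem tendsto_gxiKernel_atTop (hη₀ : 0 < η) (hη₁ : η < 1) (y : ℝ) :
    Tendsto (fun z => gxiKernel η z y) atTop (𝓝 1) := by
  have hA : Tendsto (fun z => exp ((y - z) / η)) atTop (𝓝 0) :=
    tendsto_exp_atBot.comp <|
      (tendsto_atBot_add_const_left _ y tendsto_neg_atTop_atBot).atBot_div_const hη₀
  have hexp : Tendsto (fun z => exp (-z)) atTop (𝓝 0) :=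
    tendsto_exp_atBot.comp tendsto_neg_atTop_atBot
  -- for `z ≥ y` the argument of `innerIntegral` lies in `(0, 1]`, so this term is `O(e^{-z})`
  have hsecond : Tendsto (fun z => η * exp (-z) * innerIntegral η (exp ((y - z) / η)))
      atTop (𝓝 0) := by
    refine squeeze_zero' (Eventually.of_forall fun z => mul_nonneg
        (mul_nonneg hη₀.le (exp_pos _).le) (innerIntegral_nonneg (exp_pos _).le)) ?_
      (by simpa using (hexp.const_mul η).mul_const (innerIntegral η 1))
    filter_upwards [eventually_ge_atTop y] with z hz
    refine mul_le_mul_of_nonneg_left ?_ (mul_nonneg hη₀.le (exp_pos _).le)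
    exact innerIntegral_monotoneOn hη₁ (exp_pos _).le (mem_Ici.2 zero_le_one)
      (exp_le_one_iff.2 (div_nonpos_of_nonpos_of_nonneg (by linarith) hη₀.le))
  simpa only [gxiKernel, neg_zero, sub_zero, exp_zero] using (hA.neg.sub hsecond).rexp

end gxiKernel

theorem Gxi_is_cdf (ξ : ℝ) (hξ : 2 < ξ)
    (η : ℝ) (hη : η = (2 + Real.sqrt ξ) / (ξ + Real.sqrt ξ)) :
    Monotone (Gxi η) ∧
      Tendsto (Gxi η) atBot (nhds 0) ∧ Tendsto (Gxi η) atTop (nhds 1) := by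
  have hsqrt : 0 ≤ √ξ := sqrt_nonneg ξ
  have hη₀ : 0 < η := hη ▸ div_pos (by linarith) (by linarith)
  have hη₁ : η < 1 := hη ▸ (div_lt_one (by linarith)).2 (by linarith)
  have hmeas z : AEStronglyMeasurable (gxiKernel η z) volume :=
    (gxiKernel_antitone hη₀ hη₁ z).measurable.aestronglyMeasurable
  have hbound z := norm_gxiKernel_le_one hη₀.le z
  rw [Gxi_eq_integral]
  refine ⟨fun z₁ z₂ hz => ?_, ?_, ?_⟩
  · have hint z := integrable_gumbelDensity.bdd_mul (hmeas z) (ae_of_all _ (hbound z))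
    exact integral_mono (hint z₁) (hint z₂) fun y =>
      mul_le_mul_of_nonneg_right (gxiKernel_monotone hη₀ hη₁ y hz) (gumbelDensity_nonneg y)
  · simpa using tendsto_integral_mul_of_norm_le_one integrable_gumbelDensity
      hmeas hbound (tendsto_gxiKernel_atBot hη₀)
  · simpa [integral_gumbelDensity] using tendsto_integral_mul_of_norm_le_one
      integrable_gumbelDensity hmeas hbound (tendsto_gxiKernel_atTop hη₀ hη₁)
end

section
/- With α_p = sqrt(2 ln p), β_p = α_p − α_p^{−1} ln(√(2π) α_p), c_p = β_p + α_p^{−1} y for fixed y ∈ ℝ, and φ the standard normal density, one has p · φ(c_p)/c_p → e^{−y} as p → ∞. -/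
/-!
Write `c_p = α_p + u_p` with the shift `u_p = cPShift p y = α_p⁻¹ (y - log (√(2π) α_p))`.
Since `α_p² = 2 log p`, `c_p² / 2 = log p + y - log (√(2π) α_p) + u_p² / 2`, so
`p φ(c_p) / c_p = e^{-y} · e^{-u_p²/2} · α_p / c_p`. As `α_p → ∞` we get `u_p → 0` and
`c_p / α_p → 1`, which gives the limit `e^{-y}`.
-/

open Filter

noncomputable def alphaP (p : ℕ) : ℝ := Real.sqrt (2 * Real.log p)

noncomputable def betaP (p : ℕ) : ℝ :=
  alphaP p - (alphaP p)⁻¹ * Real.log (Real.sqrt (2 * Real.pi) * alphaP p)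

noncomputable def cP (p : ℕ) (y : ℝ) : ℝ := betaP p + (alphaP p)⁻¹ * y

noncomputable def stdNormalPDF (x : ℝ) : ℝ :=
  (Real.sqrt (2 * Real.pi))⁻¹ * Real.exp (-x ^ 2 / 2)

open Topology Real

lemma tendsto_inv_mul_sub_log_const_mul_atTop (a y : ℝ) (ha : a ≠ 0) :
    Tendsto (fun x : ℝ => x⁻¹ * (y - log (a * x))) atTop (𝓝 0) := by
  have hlin : Tendsto (fun x : ℝ => (y - log a) * x⁻¹) atTop (𝓝 0) := by
    simpa using tendsto_inv_atTop_zero.const_mul (y - log a)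
  have hlog : Tendsto (fun x : ℝ => log x / x) atTop (𝓝 0) :=
    isLittleO_log_id_atTop.tendsto_div_nhds_zero
  have hdiff := hlin.sub hlog
  rw [sub_zero] at hdiff
  refine hdiff.congr' ?_
  filter_upwards [eventually_gt_atTop (0 : ℝ)] with x hx
  rw [log_mul ha hx.ne']
  field_simp
  ring

lemma alphaP_pos {p : ℕ} (hp : 2 ≤ p) : 0 < alphaP p :=
  sqrt_pos.2 <| mul_pos two_pos <| log_pos <| by exact_mod_cast hp

lemma alphaP_sq {p : ℕ} (hp : 1 ≤ p) : alphaP p ^ 2 = 2 * log p :=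
  sq_sqrt <| mul_nonneg zero_le_two <| log_nonneg <| by exact_mod_cast hp

lemma tendsto_alphaP_atTop : Tendsto alphaP atTop atTop :=
  tendsto_sqrt_atTop.comp <|
    (tendsto_log_atTop.comp tendsto_natCast_atTop_atTop).const_mul_atTop two_pos

noncomputable def cPShift (p : ℕ) (y : ℝ) : ℝ :=
  (alphaP p)⁻¹ * (y - log (√(2 * π) * alphaP p))

lemma cP_eq_alphaP_add_cPShift (p : ℕ) (y : ℝ) : cP p y = alphaP p + cPShift p y := by
  unfold cP betaP cPShift
  ring

lemma tendsto_cPShift (y : ℝ) : Tendsto (fun p => cPShift p y) atTop (𝓝 0) :=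
  (tendsto_inv_mul_sub_log_const_mul_atTop _ y (by positivity)).comp tendsto_alphaP_atTop

lemma tendsto_cP_div_alphaP (y : ℝ) : Tendsto (fun p => cP p y / alphaP p) atTop (𝓝 1) := by
  have h := tendsto_const_nhds (x := (1 : ℝ)).add
    ((tendsto_cPShift y).mul tendsto_alphaP_atTop.inv_tendsto_atTop)
  rw [zero_mul, add_zero] at h
  refine h.congr' ?_
  filter_upwards [eventually_ge_atTop 2] with p hp
  rw [cP_eq_alphaP_add_cPShift, add_div, div_self (alphaP_pos hp).ne', div_eq_mul_inv, Pi.inv_apply]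

lemma exp_neg_cP_sq_div_two {p : ℕ} (hp : 2 ≤ p) (y : ℝ) :
    exp (-cP p y ^ 2 / 2) =
      (p : ℝ)⁻¹ * (√(2 * π) * alphaP p) * exp (-y) * exp (-cPShift p y ^ 2 / 2) := by
  have hα := alphaP_pos hp
  have hsq : cP p y ^ 2 / 2 =
      log p - log (√(2 * π) * alphaP p) + y + cPShift p y ^ 2 / 2 := by
    rw [cP_eq_alphaP_add_cPShift, add_sq, alphaP_sq (by omega)]
    unfold cPShift
    field_simp
    ring
  rw [neg_div, hsq, neg_add, neg_add, neg_sub, exp_add, exp_add, exp_sub,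
    exp_log (by positivity), exp_log (by exact_mod_cast (by omega : 0 < p)), neg_div]
  ring

lemma mul_stdNormalPDF_cP_div_cP {p : ℕ} (hp : 2 ≤ p) (y : ℝ) :
    (p : ℝ) * stdNormalPDF (cP p y) / cP p y =
      exp (-y) * exp (-cPShift p y ^ 2 / 2) * (cP p y / alphaP p)⁻¹ := by
  have hp0 : (p : ℝ) ≠ 0 := by exact_mod_cast (by omega : p ≠ 0)
  rw [stdNormalPDF, exp_neg_cP_sq_div_two hp]
  field_simp

theorem density_over_cp_limit (y : ℝ) :
    Tendsto (fun p : ℕ => (p : ℝ) * stdNormalPDF (cP p y) / cP p y) atTop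
      (nhds (Real.exp (-y))) := by
  have hgauss : Tendsto (fun p => exp (-cPShift p y ^ 2 / 2)) atTop (𝓝 1) := by
    simpa using (((tendsto_cPShift y).pow 2).neg.div_const 2).rexp
  have hlim := ((tendsto_const_nhds (x := exp (-y))).mul hgauss).mul
    ((tendsto_cP_div_alphaP y).inv₀ one_ne_zero)
  rw [mul_one, inv_one, mul_one] at hlim
  refine hlim.congr' ?_
  filter_upwards [eventually_ge_atTop 2] with p hp
  exact (mul_stdNormalPDF_cP_div_cP hp y).symm
end

section
/- Let X₁, …, X_m be independent events conditionally given a σ-field, with conditional probabilities q₁, …, q_m. Then |P(none of the events occur) − exp(−∑ q_i)| ≤ min{1, (∑ q_i)^{−1}} ∑ q_i² ≤ max_i q_i. -/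
open MeasureTheory ProbabilityTheory

-- telescoping product bound
lemma prod_sub_prod_le_sum {ι : Type*} [DecidableEq ι] (s : Finset ι) (a b : ι → ℝ)
    (hb : ∀ i ∈ s, 0 ≤ b i) (hab : ∀ i ∈ s, b i ≤ a i) :
    ∏ i ∈ s, a i - ∏ i ∈ s, b i ≤ ∑ i ∈ s, (a i - b i) * ∏ j ∈ s.erase i, a j := by
  induction s using Finset.induction_on with
  | empty => simp
  | @insert k t hk ih =>
    have hb' : ∀ i ∈ t, 0 ≤ b i := fun i hi => hb i (Finset.mem_insert_of_mem hi)
    have hab' : ∀ i ∈ t, b i ≤ a i := fun i hi => hab i (Finset.mem_insert_of_mem hi)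
    have hak : 0 ≤ a k := le_trans (hb k (Finset.mem_insert_self k t))
      (hab k (Finset.mem_insert_self k t))
    rw [Finset.prod_insert hk, Finset.prod_insert hk, Finset.sum_insert hk]
    have h1 : a k * ∏ i ∈ t, a i - b k * ∏ i ∈ t, b i
        = a k * (∏ i ∈ t, a i - ∏ i ∈ t, b i) + (a k - b k) * ∏ i ∈ t, b i := by ring
    rw [h1]
    have h2 : a k * (∏ i ∈ t, a i - ∏ i ∈ t, b i)
        ≤ a k * ∑ i ∈ t, (a i - b i) * ∏ j ∈ t.erase i, a j :=
      mul_le_mul_of_nonneg_left (ih hb' hab') hak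
    have h3 : (a k - b k) * ∏ i ∈ t, b i ≤ (a k - b k) * ∏ i ∈ t, a i := by
      apply mul_le_mul_of_nonneg_left _ (by linarith [hab k (Finset.mem_insert_self k t)])
      exact Finset.prod_le_prod hb' hab'
    have h4 : (insert k t).erase k = t := Finset.erase_insert hk
    have h5 : a k * ∑ i ∈ t, (a i - b i) * ∏ j ∈ t.erase i, a j
        = ∑ i ∈ t, (a i - b i) * ∏ j ∈ (insert k t).erase i, a j := by
      rw [Finset.mul_sum]
      apply Finset.sum_congr rfl
      intro i hi
      have hki : k ≠ i := fun h => hk (h ▸ hi)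
      rw [Finset.erase_insert_of_ne hki, Finset.prod_insert
        (fun h => hk (Finset.mem_of_mem_erase h))]
      ring
    rw [h4]
    linarith [h2, h3, h5.le, h5.ge]

lemma exp_neg_sub_le (x : ℝ) (hx : 0 ≤ x) : Real.exp (-x) - (1 - x) ≤ x ^ 2 := by
  have h1 : Real.exp (-x) ≤ (1 + x)⁻¹ := by
    rw [Real.exp_neg]
    apply inv_anti₀ (by linarith)
    linarith [Real.add_one_le_exp x]
  have h2 : (1 + x)⁻¹ ≤ 1 - x + x ^ 2 := by
    rw [inv_le_iff_one_le_mul₀ (by linarith)]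
    nlinarith
  linarith

-- main real-analytic lemma
lemma key_ineq (m : ℕ) (q : Fin m → ℝ) (h0 : ∀ i, 0 ≤ q i) (h1 : ∀ i, q i ≤ 1) :
    |∏ i, (1 - q i) - Real.exp (-∑ i, q i)| ≤ min 1 (∑ i, q i)⁻¹ * ∑ i, q i ^ 2 := by
  set S := ∑ i, q i with hS
  have hS0 : 0 ≤ S := Finset.sum_nonneg fun i _ => h0 i
  have hqS : ∀ i : Fin m, q i ≤ S := fun i =>
    Finset.single_le_sum (fun j _ => h0 j) (Finset.mem_univ i)
  have hexp_prod : Real.exp (-S) = ∏ i, Real.exp (-q i) := by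
    rw [← Real.exp_sum]; congr 1; rw [hS, Finset.sum_neg_distrib]
  have hfac : ∀ i : Fin m, 1 - q i ≤ Real.exp (-q i) := fun i => by
    linarith [Real.add_one_le_exp (-q i)]
  have hprod_le : ∏ i, (1 - q i) ≤ Real.exp (-S) := by
    rw [hexp_prod]
    exact Finset.prod_le_prod (fun i _ => show (0:ℝ) ≤ 1 - q i by linarith [h1 i]) (fun i _ => hfac i)
  have habs : |∏ i, (1 - q i) - Real.exp (-S)|
      = Real.exp (-S) - ∏ i, (1 - q i) := by
    rw [abs_sub_comm, abs_of_nonneg (by linarith)]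
  rw [habs]
  have htel : Real.exp (-S) - ∏ i, (1 - q i)
      ≤ ∑ i, (Real.exp (-q i) - (1 - q i)) * ∏ j ∈ Finset.univ.erase i, Real.exp (-q j) := by
    rw [hexp_prod]
    exact prod_sub_prod_le_sum Finset.univ (fun i => Real.exp (-q i)) (fun i => 1 - q i)
      (fun i _ => show (0:ℝ) ≤ 1 - q i by linarith [h1 i]) (fun i _ => hfac i)
  have herase : ∀ i : Fin m, ∏ j ∈ Finset.univ.erase i, Real.exp (-q j)
      = Real.exp (-(S - q i)) := by
    intro i
    rw [← Real.exp_sum]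
    congr 1
    rw [Finset.sum_neg_distrib, hS,
      ← Finset.sum_erase_add Finset.univ q (Finset.mem_univ i)]
    ring
  rcases eq_or_lt_of_le hS0 with hSeq | hSpos
  · have hq0 : ∀ i ∈ Finset.univ, q i = 0 :=
      (Finset.sum_eq_zero_iff_of_nonneg (fun j _ => h0 j)).mp hSeq.symm
    have : Real.exp (-S) - ∏ i, (1 - q i) = 0 := by
      rw [← hSeq]
      have : ∏ i, (1 - q i) = 1 :=
        Finset.prod_eq_one fun i _ => by rw [hq0 i (Finset.mem_univ i)]; ring
      simp [this]
    rw [this]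
    apply mul_nonneg (le_min zero_le_one (by rw [← hSeq]; simp))
    exact Finset.sum_nonneg fun i _ => sq_nonneg _
  · -- key pointwise bound with a constant c
    have hterm : ∀ c : ℝ, 0 ≤ c → (∀ i : Fin m, Real.exp (-(S - q i)) ≤ c) →
        Real.exp (-S) - ∏ i, (1 - q i) ≤ c * ∑ i, q i ^ 2 := by
      intro c hc hcb
      refine le_trans htel ?_
      rw [Finset.mul_sum]
      apply Finset.sum_le_sum
      intro i _
      rw [herase i]
      calc (Real.exp (-q i) - (1 - q i)) * Real.exp (-(S - q i))
          ≤ q i ^ 2 * Real.exp (-(S - q i)) :=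
            mul_le_mul_of_nonneg_right (exp_neg_sub_le (q i) (h0 i)) (Real.exp_nonneg _)
        _ ≤ q i ^ 2 * c := mul_le_mul_of_nonneg_left (hcb i) (sq_nonneg _)
        _ = c * q i ^ 2 := mul_comm _ _
    rcases le_or_gt S 1 with hSle | hSgt
    · have hmin : min 1 S⁻¹ = 1 :=
        min_eq_left ((one_le_inv₀ hSpos).mpr hSle)
      rw [hmin]
      exact hterm 1 zero_le_one fun i => by
        rw [← Real.exp_zero]
        exact Real.exp_le_exp.mpr (by linarith [hqS i])
    · have hmin : min 1 S⁻¹ = S⁻¹ :=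
        min_eq_right (by rw [inv_le_one_iff₀]; right; linarith)
      rw [hmin]
      apply hterm S⁻¹ (by positivity)
      intro i
      have h1' : Real.exp (-(S - q i)) ≤ Real.exp (1 - S) :=
        Real.exp_le_exp.mpr (by linarith [h1 i])
      have h2' : Real.exp (1 - S) ≤ S⁻¹ := by
        rw [le_inv_comm₀ (Real.exp_pos _) hSpos] at *
        · rw [← Real.exp_neg]
          have := Real.add_one_le_exp (S - 1)
          calc S ≤ Real.exp (S - 1) := by linarith
            _ = Real.exp (-(1 - S)) := by ring_nf
      linarith
  
theorem stein_chen_void (Ω : Type*) [MeasurableSpace Ω] (μ : Measure Ω)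
    [IsProbabilityMeasure μ] (m : ℕ) (hm : 0 < m) (A : Fin m → Set Ω)
    (hAmeas : ∀ i, MeasurableSet (A i)) (hind : iIndepSet A μ)
    (q : Fin m → ℝ) (hq : ∀ i, q i = (μ (A i)).toReal) :
    |(μ (⋂ i, (A i)ᶜ)).toReal - Real.exp (-∑ i, q i)|
        ≤ min 1 (∑ i, q i)⁻¹ * ∑ i, (q i) ^ 2 ∧
      min 1 (∑ i, q i)⁻¹ * ∑ i, (q i) ^ 2
        ≤ Finset.univ.sup' ⟨⟨0, hm⟩, Finset.mem_univ _⟩ q := by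
  have h0 : ∀ i, 0 ≤ q i := fun i => by rw [hq i]; exact ENNReal.toReal_nonneg
  have h1 : ∀ i, q i ≤ 1 := fun i => by
    rw [hq i]
    exact ENNReal.toReal_le_of_le_ofReal zero_le_one (by simpa using prob_le_one)
  -- independence of complements
  have hindep : iIndep (fun i => MeasurableSpace.generateFrom {A i}) μ := hind
  have hmeas : μ (⋂ i, (A i)ᶜ) = ∏ i, μ ((A i)ᶜ) :=
    hindep.meas_iInter fun i =>
      (MeasurableSpace.measurableSet_generateFrom (show A i ∈ {A i} from rfl)).compl
  have hcompl : ∀ i : Fin m, (μ ((A i)ᶜ)).toReal = 1 - q i := by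
    intro i
    rw [measure_compl (hAmeas i) (measure_ne_top μ _), measure_univ, hq i,
      ENNReal.toReal_sub_of_le prob_le_one ENNReal.one_ne_top]
    simp
  have hreal : (μ (⋂ i, (A i)ᶜ)).toReal = ∏ i, (1 - q i) := by
    rw [hmeas, ENNReal.toReal_prod]
    exact Finset.prod_congr rfl fun i _ => hcompl i
  constructor
  · rw [hreal]
    exact key_ineq m q h0 h1
  · -- second inequality
    set M := Finset.univ.sup' ⟨⟨0, hm⟩, Finset.mem_univ _⟩ q with hM
    have hqM : ∀ i : Fin m, q i ≤ M := fun i => Finset.le_sup' q (Finset.mem_univ i)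
    have hM0 : 0 ≤ M := le_trans (h0 ⟨0, hm⟩) (hqM ⟨0, hm⟩)
    set S := ∑ i, q i with hS
    have hS0 : 0 ≤ S := Finset.sum_nonneg fun i _ => h0 i
    have hsum : ∑ i, q i ^ 2 ≤ M * S := by
      rw [hS, Finset.mul_sum]
      apply Finset.sum_le_sum
      intro i _
      rw [sq]
      exact mul_le_mul_of_nonneg_right (hqM i) (h0 i)
    rcases eq_or_lt_of_le hS0 with hSeq | hSpos
    · have : ∑ i, q i ^ 2 ≤ 0 := by rw [← hSeq] at hsum; linarith
      have h2 : ∑ i, q i ^ 2 = 0 :=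
        le_antisymm this (Finset.sum_nonneg fun i _ => sq_nonneg _)
      rw [h2, mul_zero]; exact hM0
    · rcases le_or_gt S 1 with hSle | hSgt
      · calc min 1 S⁻¹ * ∑ i, q i ^ 2 ≤ 1 * ∑ i, q i ^ 2 :=
              mul_le_mul_of_nonneg_right (min_le_left _ _)
                (Finset.sum_nonneg fun i _ => sq_nonneg _)
          _ = ∑ i, q i ^ 2 := one_mul _
          _ ≤ M * S := hsum
          _ ≤ M * 1 := mul_le_mul_of_nonneg_left hSle hM0
          _ = M := mul_one _
      · calc min 1 S⁻¹ * ∑ i, q i ^ 2 ≤ S⁻¹ * ∑ i, q i ^ 2 :=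
              mul_le_mul_of_nonneg_right (min_le_right _ _)
                (Finset.sum_nonneg fun i _ => sq_nonneg _)
          _ ≤ S⁻¹ * (M * S) := mul_le_mul_of_nonneg_left hsum (by positivity)
          _ = M := by field_simp
end
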